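/- Let 0 < b < 1/2, let μ* be the symmetric branching measure on C with constant parameter b, and let T be the associated capacity. Let λ be the fair-coin measure on 2^ℕ, i.e. the Borel probability measure with λ(I(σ)) = 2^{−|σ|} for every binary string σ. Then for every c < 1 there exists a nonempty closed set Q ⊆ 2^ℕ with λ(Q) = 0 and T(Q) ≥ c. -/

import Mathlib

/-!
Take `Q = {x | x i = 0 whenever i ≡ m [MOD m + 1]}`. One bit is fixed in every block of `m + 1`,
so `λ(Q) = 0`. By compactness, `K` meets `Q` iff it meets every clopen approximation
`Q_n = {x | x i = 0 for the constrained i < n}`, and `K` misses `Q_n` iff its level-`n` tree has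
no node whose cylinder lies in `Q_n`. Splitting the branching tree at its root turns the
probability of this into a recursion along the levels. Read as hit probabilities `h`, a
constrained level multiplies `h` by `1 - b`, and an unconstrained one replaces it by
`h (1 + (1 - 2b)(1 - h))`, which pushes every positive `h` towards `1`. So for `m` large the hit
probability of every `Q_n` stays above any given `u < 1`.
-/

open Set MeasureTheory Topology Filter

/-- Cantor space `2^ℕ`. -/
abbrev Cantor : Type := ℕ → Bool

/-- The basic interval `I(σ)` of all extensions of the finite binary string `σ`. -/
def cyl (σ : List Bool) : Set Cantor :=
  {x | ∀ i : Fin σ.length, x i = σ.get i}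

/-- The space `C` of nonempty closed subsets of Cantor space. -/
abbrev CC : Type := {K : Set Cantor // K.Nonempty ∧ IsClosed K}

/-- The hit-or-miss topology on `C`, generated by the sets
`V(U) = {K : K ∩ U ≠ ∅}` and `W(U) = {K : K ⊆ U}` for `U` open. -/
instance (priority := 10000) hitMissTop : TopologicalSpace CC :=
  TopologicalSpace.generateFrom
    ({S | ∃ U : Set Cantor, IsOpen U ∧ S = {K : CC | (K.1 ∩ U).Nonempty}} ∪
     {S | ∃ U : Set Cantor, IsOpen U ∧ S = {K : CC | K.1 ⊆ U}})

/-- The Borel σ-algebra of the hit-or-miss topology. -/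
instance (priority := 10000) hitMissMeasurable : MeasurableSpace CC := borel CC

/-- `A` is a finite tree of height `n` without dead ends. -/
def FinTree (n : ℕ) (A : Finset (List Bool)) : Prop :=
  A.Nonempty ∧
  (∀ σ ∈ A, σ.length ≤ n) ∧
  (∀ σ τ : List Bool, σ <+: τ → τ ∈ A → σ ∈ A) ∧
  (∀ σ ∈ A, σ.length < n → σ ++ [false] ∈ A ∨ σ ++ [true] ∈ A)

/-- `U_A = {K ∈ C : T_K ∩ {0,1}^{≤ n} = A}`. -/
def UA (n : ℕ) (A : Finset (List Bool)) : Set CC :=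
  {K | ∀ σ : List Bool, σ.length ≤ n → (σ ∈ A ↔ (K.1 ∩ cyl σ).Nonempty)}

/-- The weight of a node `σ` of `A` in the symmetric branching process with parameter `β`. -/
noncomputable def symWeight (β : List Bool → ℝ) (A : Finset (List Bool)) (σ : List Bool) : ℝ :=
  if σ ++ [false] ∈ A ∧ σ ++ [true] ∈ A then 1 - 2 * β σ else β σ

/-- `μ` is the symmetric branching measure on `C` with parameter `β`. -/
def IsSymBranching (β : List Bool → ℝ) (μ : Measure CC) : Prop :=
  IsProbabilityMeasure μ ∧
  ∀ (n : ℕ) (A : Finset (List Bool)), FinTree n A →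
    (μ (UA n A)).toReal = ∏ σ ∈ A.filter (fun σ => σ.length < n), symWeight β A σ

/-- The weight of a node `σ` of `A` in the `(b₀,b₁)`-branching process. -/
noncomputable def asymWeight (b0 b1 : ℝ) (A : Finset (List Bool)) (σ : List Bool) : ℝ :=
  if σ ++ [false] ∈ A ∧ σ ++ [true] ∈ A then 1 - b0 - b1
  else if σ ++ [false] ∈ A then b0 else b1

/-- `μ` is the `(b₀,b₁)`-branching measure on `C`. -/
def IsBranching (b0 b1 : ℝ) (μ : Measure CC) : Prop :=
  IsProbabilityMeasure μ ∧
  ∀ (n : ℕ) (A : Finset (List Bool)), FinTree n A →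
    (μ (UA n A)).toReal = ∏ σ ∈ A.filter (fun σ => σ.length < n), asymWeight b0 b1 A σ

/-- The capacity `T(Q) = μ*({K ∈ C : K ∩ Q ≠ ∅})` associated to a measure on `C`. -/
noncomputable def cap (μ : Measure CC) (Q : Set Cantor) : ℝ :=
  (μ {K : CC | (K.1 ∩ Q).Nonempty}).toReal

section Strings

lemma mem_cyl {x : Cantor} {σ : List Bool} :
    x ∈ cyl σ ↔ ∀ i (h : i < σ.length), x i = σ[i] :=
  ⟨fun hx i h => hx ⟨i, h⟩, fun hx i => hx i i.2⟩

@[simp] lemma cyl_nil : cyl [] = univ := by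
  ext x; simp [mem_cyl]

lemma cyl_anti {σ τ : List Bool} (h : σ <+: τ) : cyl τ ⊆ cyl σ := fun x hx =>
  mem_cyl.2 fun i hi => by rw [mem_cyl.1 hx i (hi.trans_le h.length_le), h.getElem hi]

lemma mem_cyl_concat {x : Cantor} {σ : List Bool} (hx : x ∈ cyl σ) :
    x ∈ cyl (σ ++ [x σ.length]) := by
  refine mem_cyl.2 fun i hi => ?_
  rcases Nat.lt_succ_iff_lt_or_eq.1 (by simpa using hi) with hi | rfl
  · rw [List.getElem_append_left hi, mem_cyl.1 hx i hi]
  · simp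

lemma mem_cyl_ofFn (x : Cantor) (n : ℕ) : x ∈ cyl (List.ofFn fun i : Fin n => x i) :=
  mem_cyl.2 fun i hi => by simp

lemma eq_of_mem_cyl_of_length_eq {x : Cantor} {σ τ : List Bool} (hσ : x ∈ cyl σ)
    (hτ : x ∈ cyl τ) (h : σ.length = τ.length) : σ = τ :=
  List.ext_getElem h fun i h₁ h₂ => (mem_cyl.1 hσ i h₁).symm.trans (mem_cyl.1 hτ i h₂)

lemma isClopen_cyl (σ : List Bool) : IsClopen (cyl σ) := by
  have : cyl σ = ⋂ i : Fin σ.length, (fun x : Cantor => x i) ⁻¹' {σ.get i} := by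
    ext x; simp [cyl]
  rw [this]
  exact isClopen_iInter_of_finite fun i => (isClopen_discrete _).preimage (continuous_apply _)

def node (A₀ A₁ : Finset (List Bool)) : Finset (List Bool) :=
  insert [] (A₀.image (List.cons false) ∪ A₁.image (List.cons true))

variable {A₀ A₁ : Finset (List Bool)}

@[simp] lemma nil_mem_node : [] ∈ node A₀ A₁ := by
  simp [node]

@[simp] lemma cons_mem_node {d : Bool} {τ : List Bool} :
    d :: τ ∈ node A₀ A₁ ↔ τ ∈ cond d A₁ A₀ := by
  cases d <;> simp [node]

@[to_additive]
lemma prod_node {M : Type*} [CommMonoid M] (g : List Bool → M) :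
    ∏ σ ∈ node A₀ A₁, g σ =
      g [] * ((∏ τ ∈ A₀, g (false :: τ)) * ∏ τ ∈ A₁, g (true :: τ)) := by
  rw [node, Finset.prod_insert (by simp), Finset.prod_union, Finset.prod_image, Finset.prod_image]
  · exact List.cons_injective.injOn
  · exact List.cons_injective.injOn
  · rw [Finset.disjoint_left]; simp

def stringsUpTo : ℕ → Finset (List Bool)
  | 0 => {[]}
  | n + 1 => node (stringsUpTo n) (stringsUpTo n)

@[simp] lemma mem_stringsUpTo {n : ℕ} {σ : List Bool} :
    σ ∈ stringsUpTo n ↔ σ.length ≤ n := by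
  induction n generalizing σ with
  | zero => simp [stringsUpTo]
  | succ n ih => cases σ <;> simp [stringsUpTo, ih]

end Strings

section Admissible

variable (s : ℕ → Bool)

def zeroSet : Set Cantor := {x | ∀ i, s i → x i = false}

def zeroSetBelow (n : ℕ) : Set Cantor := {x | ∀ i < n, s i → x i = false}

def admissible (n : ℕ) : Finset (List Bool) :=
  (stringsUpTo n).filter fun σ => σ.length = n ∧ ∀ i (h : i < σ.length), s i → σ[i] = false

variable {s}

lemma mem_admissible {n : ℕ} {σ : List Bool} :
    σ ∈ admissible s n ↔ σ.length = n ∧ ∀ i (h : i < σ.length), s i → σ[i] = false := by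
  simp +contextual [admissible]

lemma nil_mem_admissible_zero : [] ∈ admissible s 0 := by
  simp [mem_admissible]

lemma nil_notMem_admissible_succ (n : ℕ) : [] ∉ admissible s (n + 1) := by
  simp [mem_admissible]

lemma cons_mem_admissible {n : ℕ} {d : Bool} {τ : List Bool} :
    d :: τ ∈ admissible s (n + 1) ↔
      (s 0 → d = false) ∧ τ ∈ admissible (fun i => s (i + 1)) n := by
  simp only [mem_admissible, List.length_cons, Nat.add_right_cancel_iff]
  constructor
  · rintro ⟨hn, h⟩
    exact ⟨h 0 (by simp), hn, fun i hi => h (i + 1) (by simpa using hi)⟩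
  · rintro ⟨h₀, hn, h⟩
    refine ⟨hn, fun i hi => ?_⟩
    cases i with
    | zero => simpa using h₀
    | succ i => simpa using h i (by simpa using hi)

lemma zeroSetBelow_eq_biUnion (n : ℕ) : zeroSetBelow s n = ⋃ σ ∈ admissible s n, cyl σ := by
  ext x
  simp only [zeroSetBelow, mem_ofPred_eq, mem_iUnion, exists_prop]
  constructor
  · intro hx
    refine ⟨List.ofFn fun i : Fin n => x i, mem_admissible.2 ⟨by simp, fun i hi hs => ?_⟩,
      mem_cyl_ofFn x n⟩
    simpa using hx i (by simpa using hi) hs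
  · rintro ⟨σ, hσ, hx⟩ i hi hs
    obtain ⟨rfl, h⟩ := mem_admissible.1 hσ
    rw [mem_cyl.1 hx i hi, h i hi hs]

lemma isClopen_zeroSetBelow (n : ℕ) : IsClopen (zeroSetBelow s n) := by
  rw [zeroSetBelow_eq_biUnion]
  exact (admissible s n).finite_toSet.isClopen_biUnion fun σ _ => isClopen_cyl σ

lemma zeroSetBelow_anti : Antitone (zeroSetBelow s) :=
  fun _ _ hmn _ hx i hi => hx i (hi.trans_le hmn)

lemma zeroSet_eq_iInter : zeroSet s = ⋂ n, zeroSetBelow s n := by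
  ext x
  simp only [zeroSet, zeroSetBelow, mem_ofPred_eq, mem_iInter]
  exact ⟨fun hx n i _ => hx i, fun hx i => hx (i + 1) i i.lt_succ_self⟩

lemma isClosed_zeroSet : IsClosed (zeroSet s) := by
  rw [zeroSet_eq_iInter]
  exact isClosed_iInter fun n => (isClopen_zeroSetBelow n).isClosed

lemma card_node_inter_admissible (A₀ A₁ : Finset (List Bool)) (n : ℕ) :
    (node A₀ A₁ ∩ admissible s (n + 1)).card =
      (A₀ ∩ admissible (fun i => s (i + 1)) n).card +
        if s 0 then 0 else (A₁ ∩ admissible (fun i => s (i + 1)) n).card := by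
  simp only [← Finset.filter_mem_eq_inter, Finset.card_filter, sum_node, cons_mem_admissible,
    nil_notMem_admissible_succ]
  cases s 0 <;> simp

variable (s) in
lemma card_admissible_mul (n : ℕ) :
    (admissible s n).card * 2 ^ Nat.count (fun i => s i) n = 2 ^ n := by
  induction n generalizing s with
  | zero => simp [admissible, stringsUpTo, Finset.filter_singleton]
  | succ n ih =>
    have h : admissible s (n + 1) =
        node (stringsUpTo n) (stringsUpTo n) ∩ admissible s (n + 1) :=
      (Finset.inter_eq_right.2 (Finset.filter_subset _ _)).symm
    have h' : stringsUpTo n ∩ admissible (fun i => s (i + 1)) n =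
        admissible (fun i => s (i + 1)) n :=
      Finset.inter_eq_right.2 (Finset.filter_subset _ _)
    rw [h, card_node_inter_admissible, h', Nat.count_succ', pow_succ, ← ih]
    cases s 0 <;> simp <;> ring

end Admissible

section FairCoin

variable {lam : Measure Cantor}

lemma measure_zeroSetBelow
    (hcyl : ∀ σ : List Bool, lam (cyl σ) = (2 : ENNReal)⁻¹ ^ σ.length) (s : ℕ → Bool) (n : ℕ) :
    lam (zeroSetBelow s n) = (2 : ENNReal)⁻¹ ^ Nat.count (fun i => s i) n := by
  have hcard : ((admissible s n).card : ENNReal) =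
      2 ^ n * (2 : ENNReal)⁻¹ ^ Nat.count (fun i => s i) n := by
    have h := congrArg (Nat.cast : ℕ → ENNReal) (card_admissible_mul s n)
    push_cast at h
    rw [← h, mul_assoc, ← mul_pow, ENNReal.mul_inv_cancel two_ne_zero ENNReal.ofNat_ne_top,
      one_pow, mul_one]
  rw [zeroSetBelow_eq_biUnion, measure_biUnion_finset, Finset.sum_congr rfl fun σ hσ => by
      rw [hcyl, (mem_admissible.1 hσ).1], Finset.sum_const, nsmul_eq_mul, hcard, mul_right_comm,
      ← mul_pow, ENNReal.mul_inv_cancel two_ne_zero ENNReal.ofNat_ne_top, one_pow, one_mul]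
  · intro σ hσ τ hτ hne
    refine Set.disjoint_left.2 fun x hxσ hxτ => hne (eq_of_mem_cyl_of_length_eq hxσ hxτ ?_)
    rw [(mem_admissible.1 hσ).1, (mem_admissible.1 hτ).1]
  · exact fun σ _ => (isClopen_cyl σ).isOpen.measurableSet

lemma measure_zeroSet_eq_zero
    (hcyl : ∀ σ : List Bool, lam (cyl σ) = (2 : ENNReal)⁻¹ ^ σ.length) {s : ℕ → Bool}
    (hs : {i | s i}.Infinite) :
    lam (zeroSet s) = 0 := by
  refine le_antisymm (ge_of_tendsto' (ENNReal.tendsto_pow_atTop_nhds_zero_of_lt_one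
    (by norm_num : (2 : ENNReal)⁻¹ < 1)) fun k => ?_) zero_le
  calc lam (zeroSet s) ≤ lam (zeroSetBelow s (Nat.nth (fun i => s i) k)) :=
        measure_mono (zeroSet_eq_iInter ▸ iInter_subset _ _)
    _ = (2 : ENNReal)⁻¹ ^ k := by
      rw [measure_zeroSetBelow hcyl, Nat.count_nth_of_infinite hs]

end FairCoin

section Trees

def IsPruned (n : ℕ) (A : Finset (List Bool)) : Prop :=
  (∀ σ ∈ A, σ.length ≤ n) ∧
  (∀ σ τ : List Bool, σ <+: τ → τ ∈ A → σ ∈ A) ∧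
  (∀ σ ∈ A, σ.length < n → σ ++ [false] ∈ A ∨ σ ++ [true] ∈ A)

variable {n : ℕ} {A A₀ A₁ : Finset (List Bool)}

lemma finTree_iff : FinTree n A ↔ A.Nonempty ∧ IsPruned n A :=
  Iff.rfl

lemma isPruned_empty : IsPruned n ∅ := by
  simp [IsPruned]

lemma nil_mem_of_finTree (hA : FinTree n A) : [] ∈ A :=
  let ⟨_, hτ⟩ := hA.1
  hA.2.2.1 [] _ List.nil_prefix hτ

open Classical in
noncomputable def finTrees (n : ℕ) : Finset (Finset (List Bool)) :=
  (stringsUpTo n).powerset.filter (FinTree n)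

lemma mem_finTrees : A ∈ finTrees n ↔ FinTree n A := by
  simp only [finTrees, Finset.mem_filter, Finset.mem_powerset, and_iff_right_iff_imp]
  exact fun hA σ hσ => mem_stringsUpTo.2 (hA.2.1 σ hσ)

lemma mem_insert_empty_finTrees : A ∈ insert ∅ (finTrees n) ↔ IsPruned n A := by
  rw [Finset.mem_insert, mem_finTrees, finTree_iff]
  rcases A.eq_empty_or_nonempty with rfl | hA
  · simp [isPruned_empty]
  · simp [hA, hA.ne_empty]

lemma finTrees_zero : finTrees 0 = {{[]}} := by
  ext A
  rw [mem_finTrees, Finset.mem_singleton]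
  constructor
  · intro hA
    have hsub : A ⊆ {[]} := fun σ hσ => by simpa using hA.2.1 σ hσ
    exact (Finset.subset_singleton_iff.1 hsub).resolve_left hA.1.ne_empty
  · rintro rfl
    refine ⟨Finset.singleton_nonempty _, by simp, fun σ τ h hτ => ?_, by simp⟩
    rw [Finset.mem_singleton] at hτ ⊢
    exact List.prefix_nil.1 (hτ ▸ h)

noncomputable def child (d : Bool) (A : Finset (List Bool)) : Finset (List Bool) :=
  A.preimage (List.cons d) List.cons_injective.injOn

@[simp] lemma mem_child {d : Bool} {τ : List Bool} : τ ∈ child d A ↔ d :: τ ∈ A :=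
  Finset.mem_preimage

lemma child_node (d : Bool) : child d (node A₀ A₁) = cond d A₁ A₀ := by
  ext τ; simp

lemma node_child (h : [] ∈ A) : node (child false A) (child true A) = A := by
  ext σ
  rcases σ with _ | ⟨d, τ⟩
  · simpa using h
  · cases d <;> simp

lemma isPruned_child (hA : IsPruned (n + 1) A) (d : Bool) : IsPruned n (child d A) := by
  obtain ⟨hlen, hpre, hext⟩ := hA
  refine ⟨fun τ hτ => ?_, fun σ τ h hτ => ?_, fun τ hτ hn => ?_⟩
  · simpa using hlen _ (mem_child.1 hτ)
  · exact mem_child.2 (hpre _ _ (List.cons_prefix_cons.2 ⟨rfl, h⟩) (mem_child.1 hτ))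
  · simpa using hext _ (mem_child.1 hτ) (by simpa using hn)

lemma finTree_node (h₀ : IsPruned n A₀) (h₁ : IsPruned n A₁) (hne : A₀.Nonempty ∨ A₁.Nonempty) :
    FinTree (n + 1) (node A₀ A₁) := by
  have h : ∀ d, IsPruned n (cond d A₁ A₀) := fun d => by cases d <;> assumption
  refine ⟨⟨[], nil_mem_node⟩, fun σ hσ => ?_, fun σ τ hστ hτ => ?_, fun σ hσ hn => ?_⟩
  · rcases σ with _ | ⟨d, τ⟩
    · simp
    · simpa using (h d).1 τ (cons_mem_node.1 hσ)
  · rcases σ with _ | ⟨e, σ⟩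
    · exact nil_mem_node
    rcases τ with _ | ⟨d, τ⟩
    · exact absurd hστ (by simp)
    obtain ⟨rfl, hpre⟩ := List.cons_prefix_cons.1 hστ
    exact cons_mem_node.2 ((h e).2.1 σ τ hpre (cons_mem_node.1 hτ))
  · rcases σ with _ | ⟨d, τ⟩
    · rcases hne with ⟨ρ, hρ⟩ | ⟨ρ, hρ⟩
      · exact Or.inl (cons_mem_node.2 (h₀.2.1 [] ρ List.nil_prefix hρ))
      · exact Or.inr (cons_mem_node.2 (h₁.2.1 [] ρ List.nil_prefix hρ))
    · simpa using (h d).2.2 τ (cons_mem_node.1 hσ) (by simpa using hn)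

lemma sum_erase_product_insert {α M : Type*} [DecidableEq α] [AddCommGroup M] {s : Finset α}
    {a : α} (ha : a ∉ s) (g : α × α → M) :
    ∑ p ∈ (insert a s ×ˢ insert a s).erase (a, a), g p =
      ∑ x ∈ s, ∑ y ∈ s, g (x, y) + ∑ x ∈ s, g (x, a) + ∑ y ∈ s, g (a, y) := by
  rw [Finset.sum_erase_eq_sub (Finset.mk_mem_product (Finset.mem_insert_self a s)
    (Finset.mem_insert_self a s)), Finset.sum_product, Finset.sum_insert ha, Finset.sum_insert ha,
    Finset.sum_congr rfl fun x _ => Finset.sum_insert ha, Finset.sum_add_distrib]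
  abel

lemma sum_finTrees_succ {M : Type*} [AddCommGroup M] (n : ℕ) (f : Finset (List Bool) → M) :
    ∑ A ∈ finTrees (n + 1), f A =
      ∑ A₀ ∈ finTrees n, ∑ A₁ ∈ finTrees n, f (node A₀ A₁) +
        ∑ A₀ ∈ finTrees n, f (node A₀ ∅) + ∑ A₁ ∈ finTrees n, f (node ∅ A₁) := by
  have hempty : ∅ ∉ finTrees n := fun h => Finset.not_nonempty_empty (mem_finTrees.1 h).1
  rw [← sum_erase_product_insert hempty fun p => f (node p.1 p.2)]
  refine Finset.sum_nbij' (fun A => (child false A, child true A)) (fun p => node p.1 p.2)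
    (fun A hA => ?_) (fun p hp => ?_)
    (fun A hA => node_child (nil_mem_of_finTree (mem_finTrees.1 hA)))
    (fun p _ => by simp [child_node])
    (fun A hA => by rw [node_child (nil_mem_of_finTree (mem_finTrees.1 hA))])
  · have hA := mem_finTrees.1 hA
    simp only [Finset.mem_erase, Finset.mem_product, mem_insert_empty_finTrees, ne_eq,
      Prod.mk.injEq]
    refine ⟨fun h => ?_, isPruned_child hA.2 false, isPruned_child hA.2 true⟩
    rcases hA.2.2.2 [] (nil_mem_of_finTree hA) (by simp) with h' | h'
    · exact Finset.notMem_empty [] (h.1 ▸ mem_child.2 h')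
    · exact Finset.notMem_empty [] (h.2 ▸ mem_child.2 h')
  · simp only [Finset.mem_erase, Finset.mem_product, mem_insert_empty_finTrees, ne_eq,
      Prod.ext_iff] at hp
    refine mem_finTrees.2 (finTree_node hp.2.1 hp.2.2 ?_)
    simp only [Finset.nonempty_iff_ne_empty]
    tauto

end Trees

section Weights

variable {A₀ A₁ : Finset (List Bool)}

noncomputable def treeWeight (b : ℝ) (n : ℕ) (A : Finset (List Bool)) : ℝ :=
  ∏ σ ∈ A.filter (fun σ => σ.length < n), symWeight (fun _ => b) A σ

lemma filter_node_length_lt (n : ℕ) :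
    (node A₀ A₁).filter (fun σ => σ.length < n + 1) =
      node (A₀.filter fun σ => σ.length < n) (A₁.filter fun σ => σ.length < n) := by
  ext σ
  rcases σ with _ | ⟨d, τ⟩
  · simp
  · cases d <;> simp

lemma symWeight_node_nil (β : List Bool → ℝ) :
    symWeight β (node A₀ A₁) [] = if [] ∈ A₀ ∧ [] ∈ A₁ then 1 - 2 * β [] else β [] := by
  simp [symWeight]

lemma symWeight_node_cons (β : List Bool → ℝ) (d : Bool) (τ : List Bool) :
    symWeight β (node A₀ A₁) (d :: τ) =
      symWeight (fun τ => β (d :: τ)) (cond d A₁ A₀) τ := by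
  simp [symWeight]

lemma treeWeight_node (b : ℝ) (n : ℕ) :
    treeWeight b (n + 1) (node A₀ A₁) =
      (if [] ∈ A₀ ∧ [] ∈ A₁ then 1 - 2 * b else b) *
        (treeWeight b n A₀ * treeWeight b n A₁) := by
  simp only [treeWeight, filter_node_length_lt, prod_node, symWeight_node_nil,
    symWeight_node_cons]
  rfl

@[simp] lemma treeWeight_empty (b : ℝ) (n : ℕ) : treeWeight b n ∅ = 1 := by
  simp [treeWeight]

/-- Closed form of `∑ A ∈ finTrees n, μ(U_A) x ^ #(A ∩ admissible s n)`
(`sum_treeWeight_mul_pow`), obtained by splitting the tree at its root. -/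
noncomputable def admissiblePGF (b : ℝ) : ℕ → (ℕ → Bool) → ℝ → ℝ
  | 0, _, x => x
  | n + 1, s, x =>
    let y := admissiblePGF b n (fun i => s (i + 1)) x
    if s 0 then b + (1 - b) * y else 2 * b * y + (1 - 2 * b) * y ^ 2

lemma admissiblePGF_one (b : ℝ) (n : ℕ) (s : ℕ → Bool) : admissiblePGF b n s 1 = 1 := by
  induction n generalizing s with
  | zero => rfl
  | succ n ih => cases h : s 0 <;> simp only [admissiblePGF, h, ih] <;> norm_num

theorem sum_treeWeight_mul_pow (b : ℝ) (n : ℕ) (s : ℕ → Bool) (x : ℝ) :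
    ∑ A ∈ finTrees n, treeWeight b n A * x ^ (A ∩ admissible s n).card =
      admissiblePGF b n s x := by
  induction n generalizing s x with
  | zero => simp [finTrees_zero, treeWeight, admissiblePGF, nil_mem_admissible_zero]
  | succ n ih =>
    set s' : ℕ → Bool := fun i => s (i + 1)
    -- a constrained root forbids the subtree below `1` from reaching an admissible node
    have hnode : ∀ A₀ A₁, treeWeight b (n + 1) (node A₀ A₁) *
        x ^ (node A₀ A₁ ∩ admissible s (n + 1)).card =
        (if [] ∈ A₀ ∧ [] ∈ A₁ then 1 - 2 * b else b) *
          ((treeWeight b n A₀ * x ^ (A₀ ∩ admissible s' n).card) *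
            (treeWeight b n A₁ * (if s 0 then 1 else x) ^ (A₁ ∩ admissible s' n).card)) := by
      intro A₀ A₁
      rw [treeWeight_node, card_node_inter_admissible, pow_add]
      split_ifs <;> ring
    have hnil : ∀ A ∈ finTrees n, [] ∈ A :=
      fun A hA => nil_mem_of_finTree (mem_finTrees.1 hA)
    rw [sum_finTrees_succ]
    simp +contextual only [hnode, hnil, and_self, if_true, Finset.notMem_empty, and_false,
      false_and, if_false, treeWeight_empty, Finset.empty_inter, Finset.card_empty, pow_zero,
      mul_one, one_mul]
    simp only [← Finset.mul_sum, ← Finset.sum_mul, ih]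
    cases h : s 0 <;> simp [admissiblePGF, h, s', admissiblePGF_one] <;> ring

end Weights

section HitMiss

lemma measurableSet_hits {U : Set Cantor} (hU : IsOpen U) :
    MeasurableSet {K : CC | (K.1 ∩ U).Nonempty} :=
  MeasurableSpace.measurableSet_generateFrom
    (TopologicalSpace.isOpen_generateFrom_of_mem (Or.inl ⟨U, hU, rfl⟩))

open Classical in
noncomputable def treeOf (K : CC) (n : ℕ) : Finset (List Bool) :=
  (stringsUpTo n).filter fun σ => (K.1 ∩ cyl σ).Nonempty

variable {K : CC} {n : ℕ}

lemma mem_treeOf {σ : List Bool} : σ ∈ treeOf K n ↔ σ.length ≤ n ∧ (K.1 ∩ cyl σ).Nonempty := by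
  simp [treeOf]

lemma finTree_treeOf (K : CC) (n : ℕ) : FinTree n (treeOf K n) := by
  refine ⟨⟨[], mem_treeOf.2 ⟨Nat.zero_le n, by simpa using K.2.1⟩⟩,
    fun σ hσ => (mem_treeOf.1 hσ).1, fun σ τ h hτ => ?_, fun σ hσ hn => ?_⟩
  · obtain ⟨hn, hK⟩ := mem_treeOf.1 hτ
    exact mem_treeOf.2 ⟨h.length_le.trans hn, hK.mono (inter_subset_inter_right _ (cyl_anti h))⟩
  · obtain ⟨-, x, hxK, hx⟩ := mem_treeOf.1 hσ
    have hx' : σ ++ [x σ.length] ∈ treeOf K n :=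
      mem_treeOf.2 ⟨by simpa using hn, x, hxK, mem_cyl_concat hx⟩
    cases h : x σ.length <;> simp_all

lemma mem_UA_iff {A : Finset (List Bool)} (hA : ∀ σ ∈ A, σ.length ≤ n) :
    K ∈ UA n A ↔ treeOf K n = A := by
  simp only [UA, mem_ofPred_eq, Finset.ext_iff, mem_treeOf]
  exact ⟨fun h σ => ⟨fun hσ => (h σ hσ.1).2 hσ.2, fun hσ => ⟨hA σ hσ, (h σ (hA σ hσ)).1 hσ⟩⟩,
    fun h σ hσ => by rw [← h σ]; simp [hσ]⟩

lemma measurableSet_UA (n : ℕ) (A : Finset (List Bool)) : MeasurableSet (UA n A) := by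
  have : UA n A = ⋂ σ ∈ stringsUpTo n, {K : CC | σ ∈ A ↔ (K.1 ∩ cyl σ).Nonempty} := by
    ext K; simp [UA]
  rw [this]
  exact Finset.measurableSet_biInter _ fun σ _ => measurableSet_setOfPred.2
    (measurable_const.iff (measurableSet_setOfPred.1 (measurableSet_hits (isClopen_cyl σ).isOpen)))

lemma measure_setOf_treeOf_mem (μ : Measure CC) {𝒜 : Finset (Finset (List Bool))}
    (h𝒜 : ∀ A ∈ 𝒜, ∀ σ ∈ A, σ.length ≤ n) :
    μ {K | treeOf K n ∈ 𝒜} = ∑ A ∈ 𝒜, μ (UA n A) := by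
  have : {K | treeOf K n ∈ 𝒜} = ⋃ A ∈ 𝒜, UA n A := by
    ext K
    simp only [mem_ofPred_eq, mem_iUnion, exists_prop]
    exact ⟨fun h => ⟨_, h, (mem_UA_iff (h𝒜 _ h)).2 rfl⟩,
      fun ⟨A, hA, hK⟩ => (mem_UA_iff (h𝒜 A hA)).1 hK ▸ hA⟩
  rw [this, measure_biUnion_finset _ fun A _ => measurableSet_UA n A]
  intro A hA B hB hAB
  refine Set.disjoint_left.2 fun K hKA hKB => hAB ?_
  rw [← (mem_UA_iff (h𝒜 A hA)).1 hKA, ← (mem_UA_iff (h𝒜 B hB)).1 hKB]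

lemma hits_iInter_iff {F : ℕ → Set Cantor} (hF : Antitone F) (hc : ∀ n, IsClosed (F n)) :
    (K.1 ∩ ⋂ n, F n).Nonempty ↔ ∀ n, (K.1 ∩ F n).Nonempty := by
  refine ⟨fun h n => h.mono (inter_subset_inter_right _ (iInter_subset _ n)), fun h => ?_⟩
  rw [inter_iInter]
  exact (K.2.2.isCompact.inter_right (hc 0)).nonempty_iInter_of_sequence_nonempty_isCompact_isClosed
    _ (fun n => inter_subset_inter_right _ (hF n.le_succ)) h fun n => K.2.2.inter (hc n)

variable {b : ℝ} {μ : Measure CC}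

lemma measure_hits_zeroSetBelow_toReal (hμ : IsSymBranching (fun _ => b) μ) (s : ℕ → Bool)
    (n : ℕ) :
    (μ {K : CC | (K.1 ∩ zeroSetBelow s n).Nonempty}).toReal = 1 - admissiblePGF b n s 0 := by
  have := hμ.1
  set 𝒜 := (finTrees n).filter fun A => Disjoint A (admissible s n)
  have hmiss : {K : CC | (K.1 ∩ zeroSetBelow s n).Nonempty}ᶜ = {K | treeOf K n ∈ 𝒜} := by
    ext K
    simp only [mem_compl_iff, mem_ofPred_eq, 𝒜, Finset.mem_filter,
      mem_finTrees.2 (finTree_treeOf K n), true_and, Finset.disjoint_left, mem_treeOf,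
      zeroSetBelow_eq_biUnion, inter_iUnion₂, nonempty_iUnion, exists_prop, not_exists, not_and]
    exact ⟨fun h σ hσ hσs => h σ hσs hσ.2,
      fun h σ hσs hK => h ⟨(mem_admissible.1 hσs).1.le, hK⟩ hσs⟩
  have h𝒜 : ∀ A ∈ 𝒜, ∀ σ ∈ A, σ.length ≤ n :=
    fun A hA => (mem_finTrees.1 (Finset.mem_filter.1 hA).1).2.1
  have hsum : ∑ A ∈ 𝒜, treeWeight b n A = admissiblePGF b n s 0 := by
    rw [← sum_treeWeight_mul_pow, Finset.sum_filter]
    refine Finset.sum_congr rfl fun A _ => ?_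
    simp [zero_pow_eq, Finset.disjoint_iff_inter_eq_empty]
  rw [← measureReal_def, ← compl_compl {K : CC | _}, probReal_compl_eq_one_sub
    (measurableSet_hits (isClopen_zeroSetBelow n).isOpen).compl, hmiss, measureReal_def,
    measure_setOf_treeOf_mem μ h𝒜, ENNReal.toReal_sum fun A _ => measure_ne_top μ _, ← hsum]
  congr 1
  exact Finset.sum_congr rfl fun A hA => hμ.2 n A (mem_finTrees.1 (Finset.mem_filter.1 hA).1)

lemma le_cap_zeroSet (hμ : IsSymBranching (fun _ => b) μ) (s : ℕ → Bool) {u : ℝ}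
    (hu : ∀ n, u ≤ 1 - admissiblePGF b n s 0) : u ≤ cap μ (zeroSet s) := by
  have := hμ.1
  set E : ℕ → Set CC := fun n => {K : CC | (K.1 ∩ zeroSetBelow s n).Nonempty}
  have hhits : {K : CC | (K.1 ∩ zeroSet s).Nonempty} = ⋂ n, E n := by
    ext K
    simp only [E, mem_ofPred_eq, mem_iInter, zeroSet_eq_iInter]
    exact hits_iInter_iff zeroSetBelow_anti fun n => (isClopen_zeroSetBelow n).isClosed
  have hanti : Antitone E :=
    fun m n hmn K hK => hK.mono (inter_subset_inter_right _ (zeroSetBelow_anti hmn))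
  have hfin : (⨅ n, μ (E n)) ≠ ⊤ := ne_top_of_le_ne_top (measure_ne_top μ (E 0)) (iInf_le _ 0)
  rw [cap, hhits, hanti.measure_iInter (fun n => (measurableSet_hits
    (isClopen_zeroSetBelow n).isOpen).nullMeasurableSet) ⟨0, measure_ne_top μ _⟩,
    ← ENNReal.ofReal_le_iff_le_toReal hfin]
  exact le_iInf fun n => (ENNReal.ofReal_le_iff_le_toReal (measure_ne_top μ _)).2
    ((hu n).trans_eq (measure_hits_zeroSetBelow_toReal hμ s n).symm)

end HitMiss

section Analysis

variable {b : ℝ}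

lemma admissiblePGF_nonneg (hb0 : 0 ≤ b) (hb : b ≤ 1 / 2) {x : ℝ} (hx : 0 ≤ x) (n : ℕ)
    (s : ℕ → Bool) : 0 ≤ admissiblePGF b n s x := by
  induction n generalizing s with
  | zero => exact hx
  | succ n ih =>
    have hy := ih fun i => s (i + 1)
    simp only [admissiblePGF]
    split_ifs
    · nlinarith
    · exact add_nonneg (by positivity) (mul_nonneg (by linarith) (sq_nonneg _))

/-- Hit probability at an unconstrained node whose children hit with probability `h`:
`1 - hitMap b h = 2 b (1 - h) + (1 - 2 b) (1 - h) ^ 2`. -/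
def hitMap (b h : ℝ) : ℝ := h * (1 + (1 - 2 * b) * (1 - h))

lemma hitMap_mono {v h : ℝ} (hb0 : 0 ≤ b) (hb : b ≤ 1 / 2) (hvh : v ≤ h) (h1 : h ≤ 1) :
    hitMap b v ≤ hitMap b h := by
  have key : hitMap b h - hitMap b v = (h - v) * (2 * b + (1 - 2 * b) * (2 - h - v)) := by
    unfold hitMap; ring
  have : 0 ≤ (h - v) * (2 * b + (1 - 2 * b) * (2 - h - v)) :=
    mul_nonneg (by linarith) (by nlinarith)
  linarith

lemma mapsTo_hitMap (hb0 : 0 ≤ b) (hb : b ≤ 1 / 2) : MapsTo (hitMap b) (Icc 0 1) (Icc 0 1) :=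
  fun h ⟨h0, h1⟩ => by
    have key : 1 - hitMap b h = (1 - h) * (1 - (1 - 2 * b) * h) := by unfold hitMap; ring
    refine ⟨mul_nonneg h0 (by nlinarith), ?_⟩
    nlinarith [mul_nonneg (sub_nonneg.2 h1) (by nlinarith : 0 ≤ 1 - (1 - 2 * b) * h)]

lemma exists_le_iterate_hitMap {u v : ℝ} (hb : b < 1 / 2) (hv : 0 < v) (hu : u < 1) :
    ∃ m, u ≤ (hitMap b)^[m] v := by
  by_contra! hlt
  set ε := (1 - 2 * b) * (v * (1 - u))
  have hε : 0 < ε := mul_pos (by linarith) (mul_pos hv (by linarith))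
  -- below `u`, every step gains at least `ε`
  have hgrow : ∀ t : ℕ, v + t * ε ≤ (hitMap b)^[t] v := by
    intro t
    induction t with
    | zero => simp
    | succ t ih =>
      rw [Function.iterate_succ_apply']
      set h := (hitMap b)^[t] v
      have hvh : v ≤ h := le_trans (by nlinarith) ih
      have hstep : ε ≤ (1 - 2 * b) * (h * (1 - h)) :=
        mul_le_mul_of_nonneg_left
          (mul_le_mul hvh (by linarith [hlt t]) (by linarith) (by linarith)) (by linarith)
      have : hitMap b h = h + (1 - 2 * b) * (h * (1 - h)) := by unfold hitMap; ring
      push_cast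
      linarith
  obtain ⟨t, ht⟩ := exists_nat_gt (u / ε)
  have := hgrow t
  have := hlt t
  have : u < t * ε := (div_lt_iff₀ hε).1 ht
  linarith

def periodicMask (m j i : ℕ) : Bool := (i + j) % (m + 1) == m

lemma periodicMask_shift (m j : ℕ) :
    (fun i => periodicMask m j (i + 1)) = periodicMask m (j + 1) := by
  funext i
  simp only [periodicMask, Nat.add_right_comm i 1 j, Nat.add_assoc]

lemma periodicMask_add_self (m : ℕ) : periodicMask m (m + 1) = periodicMask m 0 := by
  funext i
  simp [periodicMask]

lemma infinite_periodicMask (m : ℕ) : {i | periodicMask m 0 i}.Infinite := by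
  refine Set.infinite_of_forall_exists_gt fun a => ⟨(a + 1) * (m + 1) + m, ?_, by nlinarith⟩
  simp [periodicMask]

/-- `m - j` unconstrained levels separate the root from the next constrained level. -/
lemma iterate_hitMap_le_one_sub_admissiblePGF {u : ℝ} {m : ℕ} (hb0 : 0 ≤ b) (hb : b ≤ 1 / 2)
    (hu0 : 0 ≤ u) (hu1 : u ≤ 1) (hm : u ≤ (hitMap b)^[m] ((1 - b) * u)) (n : ℕ) :
    ∀ j ≤ m, (hitMap b)^[m - j] ((1 - b) * u) ≤ 1 - admissiblePGF b n (periodicMask m j) 0 := by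
  induction n with
  | zero =>
    intro j _
    have h := (mapsTo_hitMap hb0 hb).iterate (m - j)
      (⟨by nlinarith, by nlinarith⟩ : (1 - b) * u ∈ Icc (0 : ℝ) 1)
    simpa [admissiblePGF] using h.2
  | succ n ih =>
    intro j hj
    have hy := admissiblePGF_nonneg hb0 hb le_rfl n (periodicMask m (j + 1))
    rcases hj.lt_or_eq with hj | hj
    · have hfree : periodicMask m j 0 = false := by
        simp [periodicMask, Nat.mod_eq_of_lt (hj.trans m.lt_succ_self), hj.ne]
      have hsucc : m - j = m - (j + 1) + 1 := by omega
      simp only [admissiblePGF, hfree, periodicMask_shift, Bool.false_eq_true, if_false]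
      rw [hsucc, Function.iterate_succ_apply']
      calc hitMap b ((hitMap b)^[m - (j + 1)] ((1 - b) * u))
          ≤ hitMap b (1 - admissiblePGF b n (periodicMask m (j + 1)) 0) :=
            hitMap_mono hb0 hb (ih (j + 1) hj) (by linarith)
        _ = _ := by unfold hitMap; ring
    · subst j
      have hmark : periodicMask m m 0 = true := by simp [periodicMask]
      have := ih 0 m.zero_le
      simp only [admissiblePGF, hmark, periodicMask_shift, periodicMask_add_self, if_true,
        Nat.sub_self, Function.iterate_zero, id, Nat.sub_zero] at this ⊢
      nlinarith

end Analysis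

theorem stmt_9_general (b : ℝ) (hb0 : 0 < b) (hb : b < 1 / 2)
    (μ : Measure CC) (hμ : IsSymBranching (fun _ => b) μ)
    (lam : Measure Cantor)
    (hcyl : ∀ σ : List Bool, lam (cyl σ) = (2 : ENNReal)⁻¹ ^ σ.length)
    (c : ℝ) (hc : c < 1) :
    ∃ Q : Set Cantor, Q.Nonempty ∧ IsClosed Q ∧ lam Q = 0 ∧ c ≤ cap μ Q := by
  obtain ⟨u, hcu, hu0, hu1⟩ : ∃ u : ℝ, c ≤ u ∧ 0 < u ∧ u < 1 :=
    ⟨max c (1 / 2), le_max_left _ _, by positivity, max_lt hc (by norm_num)⟩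
  obtain ⟨m, hm⟩ := exists_le_iterate_hitMap hb (by nlinarith : 0 < (1 - b) * u) hu1
  refine ⟨zeroSet (periodicMask m 0), ⟨fun _ => false, fun _ _ => rfl⟩, isClosed_zeroSet,
    measure_zeroSet_eq_zero hcyl (infinite_periodicMask m),
    hcu.trans (le_cap_zeroSet hμ _ fun n => ?_)⟩
  simpa using (iterate_hitMap_le_one_sub_admissiblePGF hb0.le hb.le hu0.le hu1.le hm n 0
    m.zero_le).trans' hm

/-- for `0 < b < 1/2` and the symmetric branching measure with constant
parameter `b`, and `λ` the fair-coin measure on Cantor space, for every `c < 1` there is a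
nonempty closed `Q` with `λ(Q) = 0` and capacity `T(Q) ≥ c`. -/
theorem stmt_9 (b : ℝ) (hb0 : 0 < b) (hb : b < 1 / 2)
    (μ : Measure CC) (hμ : IsSymBranching (fun _ => b) μ)
    (lam : Measure Cantor) (hlam : IsProbabilityMeasure lam)
    (hcyl : ∀ σ : List Bool, lam (cyl σ) = (2 : ENNReal)⁻¹ ^ σ.length)
    (c : ℝ) (hc : c < 1) :
    ∃ Q : Set Cantor, Q.Nonempty ∧ IsClosed Q ∧ lam Q = 0 ∧ c ≤ cap μ Q :=
  stmt_9_general b hb0 hb μ hμ lam hcyl c hc
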